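/- (Eckart–Young for matrices, spectral norm) Let A ∈ ℝ^{m×n} have singular value decomposition with singular values σ₁ ≥ σ₂ ≥ ... . For any k < rank(A), the best approximation of A in spectral norm by matrices of rank at most k has error σ_{k+1}: min_{rank(B) ≤ k} ‖A − B‖₂ = σ_{k+1}, attained by the truncated SVD. -/

import Mathlib

/-!
Any `B` of rank at most `k` annihilates a nonzero vector `x` of the `(k+1)`-dimensional span of
`v 0, …, v k`, on which `‖A x‖ ≥ σ k * ‖x‖`; hence `‖A - B‖₂ ≥ σ k`. Conversely
`A - A_k = ∑_{i ≥ k} σ i u i v iᵀ` has norm `max_{i ≥ k} σ i = σ k`.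
-/

open scoped RealInnerProductSpace

/-- The spectral (ℓ²-operator) norm `‖A‖₂` of a real matrix: the operator norm of the
induced linear map between Euclidean spaces. -/
noncomputable def spectralNorm' {m n : ℕ} (A : Matrix (Fin m) (Fin n) ℝ) : ℝ :=
  ‖LinearMap.toContinuousLinearMap (Matrix.toEuclideanLin A)‖

open InnerProductSpace Module Submodule

section Orthonormal

variable {ι E : Type*} [NormedAddCommGroup E] [InnerProductSpace ℝ E] {v : ι → E}

theorem Orthonormal.norm_sum_smul_sq [Fintype ι] (hv : Orthonormal ℝ v) (a : ι → ℝ) :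
    ‖∑ i, a i • v i‖ ^ 2 = ∑ i, a i ^ 2 := by
  rw [← real_inner_self_eq_norm_sq, hv.inner_sum]
  simp only [conj_trivial, sq]

theorem Orthonormal.finrank_span_image (hv : Orthonormal ℝ v) (s : Finset ι) :
    finrank ℝ (span ℝ (v '' s)) = s.card := by
  rw [Set.image_eq_range, ← Fintype.card_coe]
  exact finrank_span_eq_card (hv.linearIndependent.comp _ Subtype.val_injective)

end Orthonormal

theorem Submodule.exists_sum_smul_eq_of_mem_span_image {ι R M : Type*} [Fintype ι] [Semiring R]
    [AddCommMonoid M] [Module R M] {v : ι → M} {s : Set ι} {x : M} (hx : x ∈ span R (v '' s)) :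
    ∃ a : ι → R, (∀ i ∉ s, a i = 0) ∧ ∑ i, a i • v i = x := by
  obtain ⟨l, hl, rfl⟩ := (Finsupp.mem_span_image_iff_linearCombination R).mp hx
  refine ⟨l, fun i hi => Finsupp.notMem_support_iff.mp fun h => hi (hl h), ?_⟩
  rw [Finsupp.linearCombination_apply]
  exact (Finsupp.sum_fintype l (fun i a => a • v i) fun i => zero_smul R (v i)).symm

theorem LinearMap.exists_mem_ne_zero_map_eq_zero_of_finrank_range_lt {K V V₂ : Type*}
    [DivisionRing K] [AddCommGroup V] [Module K V] [AddCommGroup V₂] [Module K V₂]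
    (f : V →ₗ[K] V₂) (W : Submodule K V) [FiniteDimensional K W]
    [FiniteDimensional K (LinearMap.range f)] (h : finrank K (LinearMap.range f) < finrank K W) :
    ∃ x ∈ W, x ≠ 0 ∧ f x = 0 := by
  have hrange : finrank K (LinearMap.range (f.domRestrict W)) ≤ finrank K (LinearMap.range f) := by
    rw [LinearMap.range_domRestrict]
    exact Submodule.finrank_mono LinearMap.map_le_range
  have hker : LinearMap.ker (f.domRestrict W) ≠ ⊥ := by
    intro hbot
    have := (f.domRestrict W).finrank_range_add_finrank_ker
    rw [hbot, finrank_bot] at this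
    omega
  obtain ⟨⟨x, hxW⟩, hx, hx0⟩ := Submodule.exists_mem_ne_zero_of_ne_bot hker
  exact ⟨x, hxW, fun h => hx0 (Subtype.ext h), hx⟩

theorem ContinuousLinearMap.le_opNorm_sub_of_finrank_range_lt {𝕜 E F : Type*}
    [NontriviallyNormedField 𝕜] [NormedAddCommGroup E] [NormedSpace 𝕜 E] [NormedAddCommGroup F]
    [NormedSpace 𝕜 F] (T S : E →L[𝕜] F) (W : Submodule 𝕜 E) [FiniteDimensional 𝕜 W]
    [FiniteDimensional 𝕜 (LinearMap.range (S : E →ₗ[𝕜] F))] {c : ℝ} (hT : ∀ x ∈ W, c * ‖x‖ ≤ ‖T x‖)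
    (hS : finrank 𝕜 (LinearMap.range (S : E →ₗ[𝕜] F)) < finrank 𝕜 W) : c ≤ ‖T - S‖ := by
  obtain ⟨x, hxW, hx0, hSx⟩ :=
    (S : E →ₗ[𝕜] F).exists_mem_ne_zero_map_eq_zero_of_finrank_range_lt W hS
  refine le_of_mul_le_mul_right ?_ (norm_pos_iff.mpr hx0)
  calc c * ‖x‖ ≤ ‖T x‖ := hT x hxW
    _ = ‖(T - S) x‖ := by rw [sub_apply, show S x = 0 from hSx, sub_zero]
    _ ≤ ‖T - S‖ * ‖x‖ := (T - S).le_opNorm x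

section SVD

variable {ι E F : Type*} [Fintype ι] [NormedAddCommGroup E] [InnerProductSpace ℝ E]
  [NormedAddCommGroup F] [InnerProductSpace ℝ F]

noncomputable def svdOperator (τ : ι → ℝ) (u : ι → F) (v : ι → E) : E →L[ℝ] F :=
  ∑ i, τ i • rankOne ℝ (u i) (v i)

variable {u : ι → F} {v : ι → E}

theorem svdOperator_apply (τ : ι → ℝ) (x : E) :
    svdOperator τ u v x = ∑ i, (τ i * ⟪x, v i⟫) • u i := by
  simp [svdOperator, smul_smul, real_inner_comm]

theorem svdOperator_sub (τ τ' : ι → ℝ) :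
    svdOperator τ u v - svdOperator τ' u v = svdOperator (τ - τ') u v := by
  simp only [svdOperator, Pi.sub_apply, sub_smul, Finset.sum_sub_distrib]

theorem svdOperator_apply_sum_smul (hv : Orthonormal ℝ v) (τ a : ι → ℝ) :
    svdOperator τ u v (∑ i, a i • v i) = ∑ i, (τ i * a i) • u i := by
  simp only [svdOperator_apply, hv.inner_left_fintype, conj_trivial]

theorem svdOperator_apply_self [DecidableEq ι] (hv : Orthonormal ℝ v) (τ : ι → ℝ) (j : ι) :
    svdOperator τ u v (v j) = τ j • u j := by
  simpa [Pi.single_apply] using svdOperator_apply_sum_smul (u := u) hv τ (Pi.single j 1)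

theorem norm_svdOperator_apply_le (hu : Orthonormal ℝ u) (hv : Orthonormal ℝ v) {τ : ι → ℝ}
    {c : ℝ} (hc : 0 ≤ c) (hτ : ∀ i, |τ i| ≤ c) (x : E) :
    ‖svdOperator τ u v x‖ ≤ c * ‖x‖ := by
  refine (sq_le_sq₀ (norm_nonneg _) (by positivity)).mp ?_
  calc ‖svdOperator τ u v x‖ ^ 2 = ∑ i, τ i ^ 2 * ⟪v i, x⟫ ^ 2 := by
        simp only [svdOperator_apply, hu.norm_sum_smul_sq, mul_pow, real_inner_comm]
    _ ≤ ∑ i, c ^ 2 * ⟪v i, x⟫ ^ 2 := by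
        refine Finset.sum_le_sum fun i _ => mul_le_mul_of_nonneg_right ?_ (sq_nonneg _)
        exact sq_le_sq' (abs_le.mp (hτ i)).1 (abs_le.mp (hτ i)).2
    _ = c ^ 2 * ∑ i, ‖⟪v i, x⟫‖ ^ 2 := by simp [Finset.mul_sum]
    _ ≤ (c * ‖x‖) ^ 2 := by
        rw [mul_pow]
        exact mul_le_mul_of_nonneg_left (hv.sum_inner_products_le x) (sq_nonneg c)

theorem norm_svdOperator_eq (hu : Orthonormal ℝ u) (hv : Orthonormal ℝ v) {τ : ι → ℝ} (j : ι)
    (hτ : ∀ i, |τ i| ≤ |τ j|) : ‖svdOperator τ u v‖ = |τ j| := by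
  classical
  refine le_antisymm
    (ContinuousLinearMap.opNorm_le_bound _ (abs_nonneg _) (norm_svdOperator_apply_le hu hv
      (abs_nonneg _) hτ)) ?_
  calc |τ j| = ‖svdOperator τ u v (v j)‖ := by
        rw [svdOperator_apply_self hv, norm_smul, hu.1 j, Real.norm_eq_abs, mul_one]
    _ ≤ ‖svdOperator τ u v‖ := ContinuousLinearMap.unit_le_opNorm _ _ (hv.1 j).le

theorem le_norm_svdOperator_apply (hu : Orthonormal ℝ u) (hv : Orthonormal ℝ v) {τ : ι → ℝ}
    {s : Set ι} {c : ℝ} (hc : 0 ≤ c) (hτ : ∀ i ∈ s, c ≤ τ i) {x : E}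
    (hx : x ∈ span ℝ (v '' s)) : c * ‖x‖ ≤ ‖svdOperator τ u v x‖ := by
  obtain ⟨a, ha, rfl⟩ := Submodule.exists_sum_smul_eq_of_mem_span_image hx
  refine (sq_le_sq₀ (by positivity) (norm_nonneg _)).mp ?_
  rw [svdOperator_apply_sum_smul hv, hu.norm_sum_smul_sq, mul_pow, hv.norm_sum_smul_sq,
    Finset.mul_sum]
  gcongr with i
  by_cases hi : i ∈ s
  · rw [mul_pow]
    gcongr
    exact hτ i hi
  · simp [ha i hi]

theorem finrank_range_svdOperator_le (τ : ι → ℝ) (s : Finset ι) (hτ : ∀ i ∉ s, τ i = 0) :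
    finrank ℝ (LinearMap.range (svdOperator τ u v : E →ₗ[ℝ] F)) ≤ s.card := by
  classical
  have hrange : LinearMap.range (svdOperator τ u v : E →ₗ[ℝ] F) ≤ span ℝ (s.image u : Set F) := by
    rintro _ ⟨x, rfl⟩
    rw [ContinuousLinearMap.coe_coe, svdOperator_apply]
    refine Submodule.sum_mem _ fun i _ => ?_
    by_cases hi : i ∈ s
    · exact Submodule.smul_mem _ _ (subset_span (Finset.mem_coe.mpr (Finset.mem_image_of_mem u hi)))
    · simp [hτ i hi]
  calc _ ≤ finrank ℝ (span ℝ (s.image u : Set F)) := Submodule.finrank_mono hrange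
    _ ≤ (s.image u).card := finrank_span_finset_le_card _
    _ ≤ s.card := Finset.card_image_le

theorem le_norm_svdOperator_sub_of_finrank_range_lt (hu : Orthonormal ℝ u)
    (hv : Orthonormal ℝ v) {τ : ι → ℝ} {s : Finset ι} {c : ℝ} (hc : 0 ≤ c)
    (hτ : ∀ i ∈ s, c ≤ τ i) (S : E →L[ℝ] F)
    [FiniteDimensional ℝ (LinearMap.range (S : E →ₗ[ℝ] F))]
    (hS : finrank ℝ (LinearMap.range (S : E →ₗ[ℝ] F)) < s.card) :
    c ≤ ‖svdOperator τ u v - S‖ :=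
  haveI := FiniteDimensional.span_of_finite ℝ (s.finite_toSet.image v)
  (svdOperator τ u v).le_opNorm_sub_of_finrank_range_lt S (span ℝ (v '' s))
    (fun _ hx => le_norm_svdOperator_apply hu hv hc hτ hx) (hv.finrank_span_image s ▸ hS)

theorem norm_svdOperator_indicator_Ici [LinearOrder ι] (hu : Orthonormal ℝ u)
    (hv : Orthonormal ℝ v) {σ : ι → ℝ} (hσ0 : ∀ i, 0 ≤ σ i) (hσ : Antitone σ) (j : ι) :
    ‖svdOperator ((Set.Ici j).indicator σ) u v‖ = σ j := by
  have hσj : (Set.Ici j).indicator σ j = σ j := Set.indicator_of_mem Set.self_mem_Ici σ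
  rw [norm_svdOperator_eq hu hv j fun i => ?_, hσj, abs_of_nonneg (hσ0 j)]
  rw [hσj, abs_of_nonneg (hσ0 j), Set.indicator_apply]
  split_ifs with hi
  · exact (abs_of_nonneg (hσ0 i)).trans_le (hσ hi)
  · simpa using hσ0 j

end SVD

theorem Matrix.rank_eq_finrank_range_toEuclideanLin {𝕜 m n : Type*} [RCLike 𝕜] [Fintype m]
    [Fintype n] [DecidableEq n] (A : Matrix m n 𝕜) :
    A.rank = finrank 𝕜 (LinearMap.range (Matrix.toEuclideanLin A)) :=
  A.rank_eq_finrank_range_toLin (EuclideanSpace.basisFun m 𝕜).toBasis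
    (EuclideanSpace.basisFun n 𝕜).toBasis

theorem spectralNorm'_sub {m n : ℕ} (A B : Matrix (Fin m) (Fin n) ℝ) :
    spectralNorm' (A - B) = ‖LinearMap.toContinuousLinearMap (Matrix.toEuclideanLin A)
      - LinearMap.toContinuousLinearMap (Matrix.toEuclideanLin B)‖ := by
  rw [spectralNorm', map_sub, map_sub]

theorem eckart_young_spectral_norm_general
    {m n : ℕ} (A : Matrix (Fin m) (Fin n) ℝ)
    (p : ℕ)
    (σ : Fin p → ℝ) (u : Fin p → EuclideanSpace ℝ (Fin m))
    (v : Fin p → EuclideanSpace ℝ (Fin n))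
    (hσ0 : ∀ i, 0 ≤ σ i) (hσa : ∀ i j : Fin p, i ≤ j → σ j ≤ σ i)
    (hu : Orthonormal ℝ u) (hv : Orthonormal ℝ v)
    (hsvd : ∀ x : EuclideanSpace ℝ (Fin n),
      Matrix.toEuclideanLin A x = ∑ i : Fin p, (σ i * ⟪x, v i⟫) • u i)
    (k : ℕ) (hkp : k < p) :
    IsLeast {r : ℝ | ∃ B : Matrix (Fin m) (Fin n) ℝ, B.rank ≤ k ∧
        r = spectralNorm' (A - B)} (σ ⟨k, hkp⟩)
    ∧ ∃ B : Matrix (Fin m) (Fin n) ℝ,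
        (∀ x : EuclideanSpace ℝ (Fin n), Matrix.toEuclideanLin B x
            = ∑ i : Fin p, (if (i : ℕ) < k then σ i * ⟪x, v i⟫ else 0) • u i)
        ∧ B.rank ≤ k ∧ spectralNorm' (A - B) = σ ⟨k, hkp⟩ := by
  set K : Fin p := ⟨k, hkp⟩
  have hA : LinearMap.toContinuousLinearMap (Matrix.toEuclideanLin A) = svdOperator σ u v :=
    ContinuousLinearMap.ext fun x => (hsvd x).trans (svdOperator_apply σ x).symm
  set B₀ := Matrix.toEuclideanLin.symm (svdOperator ((Set.Iio K).indicator σ) u v :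
    EuclideanSpace ℝ (Fin n) →ₗ[ℝ] EuclideanSpace ℝ (Fin m))
  have hB₀ : LinearMap.toContinuousLinearMap (Matrix.toEuclideanLin B₀)
      = svdOperator ((Set.Iio K).indicator σ) u v := by
    ext1 x; simp [B₀]
  have hB₀rank : B₀.rank ≤ k := by
    rw [Matrix.rank_eq_finrank_range_toEuclideanLin, LinearEquiv.apply_symm_apply]
    refine (finrank_range_svdOperator_le _ (Finset.Iio K) fun i hi => ?_).trans_eq (Fin.card_Iio K)
    exact Set.indicator_of_notMem (by simpa using hi) σ
  have hB₀norm : spectralNorm' (A - B₀) = σ K := by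
    rw [spectralNorm'_sub, hA, hB₀, svdOperator_sub, ← Set.indicator_compl, Set.compl_Iio,
      norm_svdOperator_indicator_Ici hu hv hσ0 hσa]
  refine ⟨⟨⟨B₀, hB₀rank, hB₀norm.symm⟩, ?_⟩, B₀, fun x => ?_, hB₀rank, hB₀norm⟩
  · rintro _ ⟨B, hB, rfl⟩
    rw [spectralNorm'_sub, hA]
    refine le_norm_svdOperator_sub_of_finrank_range_lt hu hv (hσ0 K) (s := Finset.Iic K)
      (fun i hi => hσa i K (Finset.mem_Iic.mp hi)) _ ?_
    rw [Fin.card_Iic, LinearMap.coe_toContinuousLinearMap,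
      ← Matrix.rank_eq_finrank_range_toEuclideanLin]
    exact Nat.lt_succ_of_le hB
  · rw [← LinearMap.coe_toContinuousLinearMap', hB₀, svdOperator_apply]
    simp [Set.indicator_apply, ite_mul, K, Fin.lt_def]

/-- Eckart–Young for matrices, spectral norm.
Let `A ∈ ℝ^{m×n}` have singular value decomposition
`A x = Σ_{i<p} σ i ⟪x, v i⟫ u i` with `p = min m n`, singular values
`σ 0 ≥ σ 1 ≥ ⋯ ≥ 0` and orthonormal left/right singular vectors `u i`, `v i`.
For any `k < rank A`, the best approximation of `A` in spectral norm by matrices of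
rank at most `k` has error `σ k` (the (k+1)-st singular value, 0-based):
`min_{rank B ≤ k} ‖A − B‖₂ = σ k` (stated as `IsLeast`), and the minimum is attained
by the truncated SVD `A_k = Σ_{i<k} σ i u i v iᵀ`. -/
theorem eckart_young_spectral_norm
    {m n : ℕ} (A : Matrix (Fin m) (Fin n) ℝ)
    (p : ℕ) (hp : p = min m n)
    (σ : Fin p → ℝ) (u : Fin p → EuclideanSpace ℝ (Fin m))
    (v : Fin p → EuclideanSpace ℝ (Fin n))
    (hσ0 : ∀ i, 0 ≤ σ i) (hσa : ∀ i j : Fin p, i ≤ j → σ j ≤ σ i)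
    (hu : Orthonormal ℝ u) (hv : Orthonormal ℝ v)
    (hsvd : ∀ x : EuclideanSpace ℝ (Fin n),
      Matrix.toEuclideanLin A x = ∑ i : Fin p, (σ i * ⟪x, v i⟫) • u i)
    (k : ℕ) (hk : k < A.rank) (hkp : k < p) :
    IsLeast {r : ℝ | ∃ B : Matrix (Fin m) (Fin n) ℝ, B.rank ≤ k ∧
        r = spectralNorm' (A - B)} (σ ⟨k, hkp⟩)
    ∧ ∃ B : Matrix (Fin m) (Fin n) ℝ,
        (∀ x : EuclideanSpace ℝ (Fin n), Matrix.toEuclideanLin B x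
            = ∑ i : Fin p, (if (i : ℕ) < k then σ i * ⟪x, v i⟫ else 0) • u i)
        ∧ B.rank ≤ k ∧ spectralNorm' (A - B) = σ ⟨k, hkp⟩ :=
  eckart_young_spectral_norm_general A p σ u v hσ0 hσa hu hv hsvd k hkp
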